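/- arXiv:0805.3172 — 3 statements merged into one kernel-verified Lean document; each statement's English description precedes it below -/
import Mathlib

section
/- Let Γ be a finite abelian group and b : Γ × Γ → ℂˣ a bilinear map (a homomorphism in each variable) that is alternating (b(x,x) = 1 for all x) and nondegenerate (if b(x,y) = 1 for all y then x = 1). Then |Γ| is a perfect square. -/
/-!
Let `n` be the exponent of `Γ` and `x` an element of order `n`. Nondegeneracy makes `b x` a
character of order `n`, so some value `ζ = b x y` is a primitive `n`-th root of unity. All values
of `b` are `n`-th roots of unity, i.e. powers of `ζ` (the values lie in a domain), so
`g ↦ (b x g, b y g)` maps `Γ` onto `μₙ × μₙ`: its kernel `K`, the orthogonal of `⟨x, y⟩`, has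
`|Γ| = n² |K|`, and `Γ = ⟨x, y⟩ K` makes `b` restricted to `K` again nondegenerate. Induct on `|Γ|`.
-/

open Function

theorem MonoidHom.exponent_range_eq_orderOf {G M : Type*} [Group G] [CommGroup M] (f : G →* M) :
    Monoid.exponent f.range = orderOf f := by
  refine Nat.dvd_right_iff_eq.mp fun k => ?_
  rw [Monoid.exponent_dvd_iff_forall_pow_eq_one, orderOf_dvd_iff_pow_eq_one, MonoidHom.ext_iff]
  simp [Subtype.ext_iff]

section AlternatingPairing

variable {Γ : Type*} [CommGroup Γ]

section

variable {M : Type*} [CommGroup M] (b : Γ →* Γ →* M)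

def MonoidHom.domRestrict₁₂ (K : Subgroup Γ) : K →* K →* M :=
  (b.comp K.subtype).compl₂ K.subtype

theorem apply_swap_of_alternating (halt : ∀ x, b x x = 1) (x y : Γ) : b y x = (b x y)⁻¹ := by
  refine eq_inv_of_mul_eq_one_left ?_
  simpa only [map_mul, MonoidHom.mul_apply, halt, one_mul, mul_one, mul_comm (b x y)]
    using halt (x * y)

theorem exists_isPrimitiveRoot_apply [Finite Γ] (hb : Injective b) :
    ∃ x y, IsPrimitiveRoot (b x y) (Monoid.exponent Γ) := by
  obtain ⟨x, hx⟩ := Monoid.exists_orderOf_eq_exponent (Monoid.ExponentExists.of_finite (G := Γ))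
  have hrange : Monoid.exponent (b x).range = Monoid.exponent Γ := by
    rw [MonoidHom.exponent_range_eq_orderOf, orderOf_injective b hb, hx]
  have : Finite (b x).range := Finite.of_surjective _ (b x).rangeRestrict_surjective
  obtain ⟨u, hu⟩ :=
    Monoid.exists_orderOf_eq_exponent (Monoid.ExponentExists.of_finite (G := (b x).range))
  obtain ⟨y, hy⟩ := u.2
  refine ⟨x, y, ?_⟩
  rw [← hrange, ← hu, ← Subgroup.orderOf_coe, ← hy]
  exact IsPrimitiveRoot.orderOf _

theorem prod_apply_zpow_mul_zpow {x y : Γ} (halt : ∀ x, b x x = 1) (i j : ℤ) :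
    (b x).prod (b y) (x ^ (-j) * y ^ i) = (b x y ^ i, b x y ^ j) := by
  simp [halt, apply_swap_of_alternating b halt y x]

end

variable {R : Type*} [CommRing R] [IsDomain R] (b : Γ →* Γ →* Rˣ) {x y : Γ} [Finite Γ]

theorem range_prod_eq_rootsOfUnity_prod (halt : ∀ x, b x x = 1)
    (hζ : IsPrimitiveRoot (b x y) (Monoid.exponent Γ)) :
    ((b x).prod (b y)).range =
      (rootsOfUnity (Monoid.exponent Γ) R).prod (rootsOfUnity (Monoid.exponent Γ) R) := by
  apply le_antisymm
  · rintro _ ⟨g, rfl⟩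
    simp only [Subgroup.mem_prod, mem_rootsOfUnity, MonoidHom.prod_apply, ← map_pow,
      Monoid.pow_exponent_eq_one, map_one, and_self]
  · rintro ⟨_, _⟩ ⟨hi, hj⟩
    rw [← hζ.zpowers_eq] at hi hj
    obtain ⟨i, rfl⟩ := hi
    obtain ⟨j, rfl⟩ := hj
    exact ⟨_, prod_apply_zpow_mul_zpow b halt i j⟩

theorem card_eq_exponent_mul_card_ker (halt : ∀ x, b x x = 1)
    (hζ : IsPrimitiveRoot (b x y) (Monoid.exponent Γ)) :
    Nat.card Γ = Monoid.exponent Γ * Monoid.exponent Γ * Nat.card ↥((b x).prod (b y)).ker := by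
  rw [← ((b x).prod (b y)).ker.card_mul_index, Subgroup.index_ker,
    range_prod_eq_rootsOfUnity_prod b halt hζ, Nat.card_congr (Subgroup.prodEquiv _ _).toEquiv, Nat.card_prod, hζ.card_rootsOfUnity', mul_comm]

theorem exists_prod_apply_zpow_mul_zpow_eq (halt : ∀ x, b x x = 1)
    (hζ : IsPrimitiveRoot (b x y) (Monoid.exponent Γ)) (g : Γ) :
    ∃ i j : ℤ, (b x).prod (b y) (x ^ (-j) * y ^ i) = (b x).prod (b y) g := by
  have hg : (b x).prod (b y) g ∈ ((b x).prod (b y)).range := ⟨g, rfl⟩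
  rw [range_prod_eq_rootsOfUnity_prod b halt hζ, Subgroup.mem_prod, ← hζ.zpowers_eq] at hg
  obtain ⟨⟨i, hi⟩, ⟨j, hj⟩⟩ := hg
  exact ⟨i, j, (prod_apply_zpow_mul_zpow b halt i j).trans (Prod.ext hi hj)⟩

theorem injective_domRestrict₁₂_ker (halt : ∀ x, b x x = 1) (hb : Injective b)
    (hζ : IsPrimitiveRoot (b x y) (Monoid.exponent Γ)) :
    Injective (b.domRestrict₁₂ ((b x).prod (b y)).ker) := by
  rw [injective_iff_map_eq_one]
  intro z hz
  refine Subtype.ext <| (injective_iff_map_eq_one b).1 hb z ?_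
  refine MonoidHom.ext fun g => ?_
  obtain ⟨i, j, hg₀⟩ := exists_prod_apply_zpow_mul_zpow_eq b halt hζ g
  have hK : g * (x ^ (-j) * y ^ i)⁻¹ ∈ ((b x).prod (b y)).ker := by
    rw [MonoidHom.mem_ker, map_mul, map_inv, hg₀, mul_inv_cancel]
  have hzK : b z (g * (x ^ (-j) * y ^ i)⁻¹) = 1 := DFunLike.congr_fun hz ⟨_, hK⟩
  obtain ⟨hxz, hyz⟩ : b x z = 1 ∧ b y z = 1 := Prod.ext_iff.1 (MonoidHom.mem_ker.1 z.2)
  calc b z g = b z (g * (x ^ (-j) * y ^ i)⁻¹) * (b z x) ^ (-j) * (b z y) ^ i := by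
        simp only [← map_zpow, ← map_mul, mul_assoc, inv_mul_cancel, mul_one]
    _ = 1 := by
        rw [apply_swap_of_alternating b halt x, apply_swap_of_alternating b halt y, hxz, hyz, hzK]
        simp only [inv_one, one_zpow, mul_one]

theorem isSquare_natCard_of_alternating (halt : ∀ x, b x x = 1) (hb : Injective b) :
    IsSquare (Nat.card Γ) := by
  induction hN : Nat.card Γ using Nat.strong_induction_on generalizing Γ with
  | _ N ih =>
  obtain hΓ | hΓ := subsingleton_or_nontrivial Γ
  · exact ⟨1, by rw [← hN, Nat.card_unique]⟩
  obtain ⟨x, y, hζ⟩ := exists_isPrimitiveRoot_apply b hb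
  have hcard := card_eq_exponent_mul_card_ker b halt hζ
  have hexp : 1 < Monoid.exponent Γ := Monoid.one_lt_exponent
  have hlt : Nat.card ((b x).prod (b y)).ker < N := by
    rw [← hN, hcard, Nat.lt_mul_iff_one_lt_left Nat.card_pos]
    nlinarith
  obtain ⟨d, hd⟩ := ih _ hlt (b.domRestrict₁₂ _) (fun z => halt z)
    (injective_domRestrict₁₂_ker b halt hb hζ) rfl
  exact ⟨Monoid.exponent Γ * d, by rw [← hN, hcard, hd]; ring⟩

end AlternatingPairing

theorem stmt_3 (Γ : Type*) [CommGroup Γ] [Fintype Γ] (b : Γ → Γ → ℂˣ)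
    (hbil₁ : ∀ x y z : Γ, b (x * y) z = b x z * b y z)
    (hbil₂ : ∀ x y z : Γ, b x (y * z) = b x y * b x z)
    (halt : ∀ x : Γ, b x x = 1)
    (hnd : ∀ x : Γ, (∀ y : Γ, b x y = 1) → x = 1) :
    IsSquare (Fintype.card Γ) := by
  let B : Γ →* Γ →* ℂˣ :=
    MonoidHom.mk' (fun x => MonoidHom.mk' (b x) (hbil₂ x)) fun x y => MonoidHom.ext (hbil₁ x y)
  have hB : Injective B := (injective_iff_map_eq_one B).2 fun x hx => hnd x (DFunLike.congr_fun hx)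
  rw [← Nat.card_eq_fintype_card]
  exact isSquare_natCard_of_alternating B halt hB
end

section
/- Let Γ be a finite abelian group and τ : Γ × Γ → ℂˣ a normalized 2-cocycle that is symmetric, i.e., τ(s,t) = τ(t,s) for all s, t ∈ Γ. Then τ is a coboundary: there exists ν : Γ → ℂˣ with ν(1) = 1 such that τ(s,t) = ν(s)ν(t)ν(st)⁻¹ for all s, t. -/
/-!
A symmetric normalized cocycle `τ` with values in an abelian group `A` makes `Γ × A`, with
`(s, a) (t, b) = (s t, a b τ(s, t))`, an *abelian* extension of `Γ` by `A`. When `A` is divisible,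
as `ℂˣ` is (`ℂ` being algebraically closed), it is an injective `ℤ`-module, so the inclusion
`A → Γ × A` has a retraction `r`, and `ν s := r (s, 1)` satisfies `ν(s) ν(t) = ν(s t) τ(s, t)`,
because `(s, 1) (t, 1) = (s t, τ(s, t))`.
-/

open Function

noncomputable instance IsAlgClosed.rootableByNatUnits {K : Type*} [Field K] [IsAlgClosed K] :
    RootableBy Kˣ ℕ :=
  rootableByOfPowLeftSurj _ _ fun {n} hn x => by
    obtain ⟨z, hz⟩ := IsAlgClosed.exists_pow_nat_eq (x : K) (Nat.pos_of_ne_zero hn)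
    have hz₀ : z ≠ 0 := by
      rintro rfl
      exact x.ne_zero (by rw [← hz, zero_pow hn])
    exact ⟨Units.mk0 z hz₀, Units.ext hz⟩

noncomputable instance IsAlgClosed.rootableByIntUnits {K : Type*} [Field K] [IsAlgClosed K] :
    RootableBy Kˣ ℤ :=
  Group.rootableByIntOfRootableByNat _

instance Additive.divisibleBy {A : Type*} [Group A] [RootableBy A ℤ] :
    DivisibleBy (Additive A) ℤ where
  div a n := Additive.ofMul (RootableBy.root a.toMul n)
  div_zero _ := congrArg Additive.ofMul (RootableBy.root_zero _)
  div_cancel _ hn := congrArg Additive.ofMul (RootableBy.root_cancel _ hn)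

theorem MonoidHom.exists_retraction_of_rootableBy {A E : Type*} [CommGroup A] [CommGroup E]
    [RootableBy A ℤ] (j : A →* E) (hj : Injective j) : ∃ r : E →* A, r.comp j = MonoidHom.id A := by
  obtain ⟨r, hr⟩ := (Module.Baer.of_divisible (Additive A)).extension_property_addMonoidHom
    (MonoidHom.toAdditive j) hj (AddMonoidHom.id _)
  exact ⟨MonoidHom.toAdditive.symm r, MonoidHom.ext fun a =>
    congrArg Additive.toMul (DFunLike.congr_fun hr (Additive.ofMul a))⟩

structure SymmCocycle (Γ A : Type*) [CommGroup Γ] [CommGroup A] where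
  toFun : Γ → Γ → A
  cocycle : ∀ s t u, toFun s t * toFun (s * t) u = toFun t u * toFun s (t * u)
  map_one_left : ∀ s, toFun 1 s = 1
  map_one_right : ∀ s, toFun s 1 = 1
  symm : ∀ s t, toFun s t = toFun t s

namespace SymmCocycle

variable {Γ A : Type*} [CommGroup Γ] [CommGroup A] (τ : SymmCocycle Γ A)

instance : CoeFun (SymmCocycle Γ A) fun _ => Γ → Γ → A := ⟨toFun⟩

structure Extension (τ : SymmCocycle Γ A) where
  base : Γ
  fiber : A

instance : Mul τ.Extension := ⟨fun x y => ⟨x.base * y.base, x.fiber * y.fiber * τ x.base y.base⟩⟩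

instance : One τ.Extension := ⟨⟨1, 1⟩⟩

instance : Inv τ.Extension := ⟨fun x => ⟨x.base⁻¹, (x.fiber * τ x.base x.base⁻¹)⁻¹⟩⟩

theorem Extension.mul_def (x y : τ.Extension) :
    x * y = ⟨x.base * y.base, x.fiber * y.fiber * τ x.base y.base⟩ := rfl

theorem Extension.one_def : (1 : τ.Extension) = ⟨1, 1⟩ := rfl

theorem Extension.inv_def (x : τ.Extension) :
    x⁻¹ = ⟨x.base⁻¹, (x.fiber * τ x.base x.base⁻¹)⁻¹⟩ := rfl

instance : CommGroup τ.Extension :=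
  { Group.ofLeftAxioms
      (fun ⟨s, a⟩ ⟨t, b⟩ ⟨u, c⟩ => by
        simp only [Extension.mul_def, Extension.mk.injEq, mul_assoc, true_and]
        rw [← τ.cocycle]
        ac_rfl)
      (fun ⟨s, a⟩ => by simp [Extension.mul_def, Extension.one_def, τ.map_one_left])
      (fun ⟨s, a⟩ => by
        simp only [Extension.mul_def, Extension.inv_def, Extension.one_def, inv_mul_cancel,
          τ.symm s⁻¹ s, Extension.mk.injEq, true_and]
        rw [mul_assoc, inv_mul_cancel]) with
    mul_comm := fun ⟨s, a⟩ ⟨t, b⟩ => by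
      simp only [Extension.mul_def, mul_comm s t, mul_comm a b, τ.symm s t] }

def inl : A →* τ.Extension where
  toFun a := ⟨1, a⟩
  map_one' := rfl
  map_mul' a b := by simp [Extension.mul_def, τ.map_one_left]

theorem inl_injective : Injective τ.inl := fun _ _ h => congrArg Extension.fiber h

theorem mk_one_mul_mk_one (s t : Γ) :
    (⟨s, 1⟩ * ⟨t, 1⟩ : τ.Extension) = ⟨s * t, 1⟩ * τ.inl (τ s t) := by
  simp [Extension.mul_def, inl, τ.map_one_right]

theorem exists_coboundary [RootableBy A ℤ] :
    ∃ ν : Γ → A, ν 1 = 1 ∧ ∀ s t, τ s t = ν s * ν t * (ν (s * t))⁻¹ := by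
  obtain ⟨r, hr⟩ := τ.inl.exists_retraction_of_rootableBy τ.inl_injective
  refine ⟨fun s => r ⟨s, 1⟩, map_one r, fun s t => ?_⟩
  have h := congrArg r (τ.mk_one_mul_mk_one s t)
  rw [map_mul, map_mul, ← MonoidHom.comp_apply, hr, MonoidHom.id_apply] at h
  rw [h, mul_inv_cancel_comm]

end SymmCocycle

theorem stmt_4_general (Γ : Type*) [CommGroup Γ] (τ : Γ → Γ → ℂˣ)
    (hcoc : ∀ s t u : Γ, τ s t * τ (s * t) u = τ t u * τ s (t * u))
    (hnorm₁ : ∀ s : Γ, τ 1 s = 1) (hnorm₂ : ∀ s : Γ, τ s 1 = 1)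
    (hsym : ∀ s t : Γ, τ s t = τ t s) :
    ∃ ν : Γ → ℂˣ, ν 1 = 1 ∧ ∀ s t : Γ, τ s t = ν s * ν t * (ν (s * t))⁻¹ :=
  (SymmCocycle.mk τ hcoc hnorm₁ hnorm₂ hsym).exists_coboundary

theorem stmt_4 (Γ : Type*) [CommGroup Γ] [Fintype Γ] (τ : Γ → Γ → ℂˣ)
    (hcoc : ∀ s t u : Γ, τ s t * τ (s * t) u = τ t u * τ s (t * u))
    (hnorm₁ : ∀ s : Γ, τ 1 s = 1) (hnorm₂ : ∀ s : Γ, τ s 1 = 1)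
    (hsym : ∀ s t : Γ, τ s t = τ t s) :
    ∃ ν : Γ → ℂˣ, ν 1 = 1 ∧ ∀ s t : Γ, τ s t = ν s * ν t * (ν (s * t))⁻¹ :=
  stmt_4_general Γ τ hcoc hnorm₁ hnorm₂ hsym
end

section
/- Let Γ be a finite abelian group with a nondegenerate alternating bilinear form α : Γ × Γ → ℂˣ. Then there exist subgroups A, B of Γ with Γ = A × B, |A| = |B|, and such that α restricted to A × A and to B × B is trivial (A and B are Lagrangian complements); in particular Γ ≅ A × Â with A ≅ B. -/
/-!
Split off hyperbolic planes. Let `x` have maximal order `e`. By nondegeneracy the character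
`β x` has image of exponent `e`, so `β x y` is a primitive `e`-th root of unity for some `y`;
as finite subgroups of `ℂˣ` are cyclic, every value of `β x` and `β y` is a power of it. Hence
`Γ = ⟨x⟩ × ⟨y⟩ × K`, where `K` is the common kernel of `β x` and `β y` and `β` is still
nondegenerate on `K`. By induction `K` has isotropic complements `A', B'` of equal order, and
then `⟨x⟩ A'` and `⟨y⟩ B'`, both of order `e |A'|`, are isotropic complements in `Γ`.
-/

open Subgroup

noncomputable def Subgroup.prodMulEquivSupOfDisjoint {G : Type*} [CommGroup G] {A B : Subgroup G}
    (h : Disjoint A B) : A × B ≃* ↥(A ⊔ B) :=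
  let f := A.subtype.noncommCoprod B.subtype fun _ _ => Commute.all _ _
  have hf : Function.Injective f := by
    rw [MonoidHom.noncommCoprod_injective, range_subtype, range_subtype]
    exact ⟨subtype_injective A, subtype_injective B, h⟩
  (MonoidHom.ofInjective hf).trans <| MulEquiv.subgroupCongr <| by
    rw [MonoidHom.noncommCoprod_range, range_subtype, range_subtype]

theorem Subgroup.card_sup_of_disjoint {G : Type*} [CommGroup G] {A B : Subgroup G}
    (h : Disjoint A B) : Nat.card ↥(A ⊔ B) = Nat.card A * Nat.card B := by
  rw [← Nat.card_prod, Nat.card_congr (prodMulEquivSupOfDisjoint h).toEquiv]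

theorem Subgroup.card_lt_of_lt {G : Type*} [Group G] {H K : Subgroup G} [Finite H] (h : K < H) :
    Nat.card K < Nat.card H :=
  (card_le_of_le h.le).lt_of_ne fun heq => h.ne (eq_of_le_of_card_ge h.le heq.ge)

theorem Subgroup.disjoint_zpowers_ker {G M : Type*} [Group G] [Group M] {φ : G →* M} {x : G}
    (h : orderOf (φ x) = orderOf x) : Disjoint (zpowers x) φ.ker := by
  rw [disjoint_iff_inf_le]
  rintro - ⟨⟨c, rfl⟩, hc : φ (x ^ c) = 1⟩
  rw [map_zpow, ← orderOf_dvd_iff_zpow_eq_one, h, orderOf_dvd_iff_zpow_eq_one] at hc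
  exact mem_bot.2 hc

theorem Units.mem_zpowers_of_pow_orderOf_eq_one {R : Type*} [CommRing R] [IsDomain R] {ζ u : Rˣ}
    (hζ : 0 < orderOf ζ) (hu : u ^ orderOf ζ = 1) : u ∈ zpowers ζ := by
  have : NeZero (orderOf ζ) := ⟨hζ.ne'⟩
  rw [(IsPrimitiveRoot.orderOf ζ).zpowers_eq, mem_rootsOfUnity]
  exact hu

section Bicharacter

variable {G M : Type*} [CommGroup G] [CommGroup M] (β : G →* G →* M)

def IsAlternating : Prop :=
  ∀ x, β x x = 1

def IsNondegenerateOn (H : Subgroup G) : Prop :=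
  ∀ x ∈ H, (∀ y ∈ H, β x y = 1) → x = 1

def IsIsotropic (S : Subgroup G) : Prop :=
  ∀ x ∈ S, ∀ y ∈ S, β x y = 1

variable {β}

theorem IsAlternating.apply_swap (hβ : IsAlternating β) (x y : G) : β y x = (β x y)⁻¹ := by
  have h := hβ (x * y)
  simp only [map_mul, MonoidHom.mul_apply, hβ x, hβ y, one_mul, mul_one] at h
  exact eq_inv_of_mul_eq_one_left h

theorem apply_eq_one_of_mem_zpowers {x s t : G} (hs : s ∈ zpowers x) (ht : β x t = 1) :
    β s t = 1 := by
  obtain ⟨c, rfl⟩ := mem_zpowers_iff.mp hs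
  rw [map_zpow, MonoidHom.zpow_apply, ht, one_zpow]

theorem apply_pow_orderOf_eq_one (x w : G) : β x w ^ orderOf x = 1 := by
  rw [← MonoidHom.pow_apply, ← map_pow, pow_orderOf_eq_one, map_one, MonoidHom.one_apply]

theorem IsAlternating.isIsotropic_zpowers (hβ : IsAlternating β) (x : G) :
    IsIsotropic β (zpowers x) :=
  fun _ hs _ ht => apply_eq_one_of_mem_zpowers hs <| by
    obtain ⟨c, rfl⟩ := mem_zpowers_iff.mp ht
    rw [map_zpow, hβ, one_zpow]

theorem IsIsotropic.sup (hβ : IsAlternating β) {S T : Subgroup G} (hS : IsIsotropic β S)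
    (hT : IsIsotropic β T) (hST : ∀ s ∈ S, ∀ t ∈ T, β s t = 1) :
    IsIsotropic β (S ⊔ T) := by
  intro g hg g' hg'
  obtain ⟨s, hs, t, ht, rfl⟩ := mem_sup.mp hg
  obtain ⟨s', hs', t', ht', rfl⟩ := mem_sup.mp hg'
  simp only [map_mul, MonoidHom.mul_apply, hβ.apply_swap s' t, hS s hs s' hs',
    hST s hs t' ht', hST s' hs' t ht, hT t ht t' ht', inv_one, mul_one]

-- By nondegeneracy the image of `β x` on `H` has exponent `orderOf x`, and a finite abelian
-- group has an element whose order is its exponent.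
theorem exists_orderOf_apply_eq_orderOf {H : Subgroup G} [Finite H] (hH : IsNondegenerateOn β H)
    {x : G} (hx : x ∈ H) : ∃ y ∈ H, orderOf (β x y) = orderOf x := by
  set R := ((β x).comp H.subtype).range
  have : Finite R := Finite.of_surjective _ ((β x).comp H.subtype).rangeRestrict_surjective
  have hexp : Monoid.exponent R = orderOf x := by
    refine Nat.dvd_antisymm ?_ (orderOf_dvd_of_pow_eq_one ?_)
    · exact Monoid.exponent_dvd_of_forall_pow_eq_one fun ⟨_, ⟨w, rfl⟩⟩ =>
        Subtype.ext (apply_pow_orderOf_eq_one x w)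
    · refine hH _ (pow_mem hx _) fun w hw => ?_
      have := congrArg Subtype.val <|
        Monoid.pow_exponent_eq_one (⟨β x w, ⟨⟨w, hw⟩, rfl⟩⟩ : R)
      rwa [map_pow, MonoidHom.pow_apply]
  obtain ⟨g, hg⟩ := Monoid.exists_orderOf_eq_exponent (Monoid.ExponentExists.of_finite (G := R))
  obtain ⟨w, hw⟩ := g.2
  refine ⟨w, w.2, ?_⟩
  rw [← hexp, ← hg, ← Subgroup.orderOf_coe, ← hw]
  rfl

variable (β) in
structure IsHyperbolicPair (x y : G) : Prop where
  ne_one : β x y ≠ 1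
  orderOf_left : orderOf (β x y) = orderOf x
  orderOf_right : orderOf (β x y) = orderOf y

-- Taking `x` of maximal order in `H` forces `orderOf y ∣ orderOf x`.
theorem exists_isHyperbolicPair {H : Subgroup G} [Finite H] (hH : IsNondegenerateOn β H)
    (hne : H ≠ ⊥) : ∃ x ∈ H, ∃ y ∈ H, IsHyperbolicPair β x y := by
  obtain ⟨x, hx⟩ := Monoid.exists_orderOf_eq_exponent (Monoid.ExponentExists.of_finite (G := H))
  rw [← Subgroup.orderOf_coe] at hx
  obtain ⟨y, hyH, hxy⟩ := exists_orderOf_apply_eq_orderOf hH x.2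
  have hyx : orderOf y ∣ orderOf (x : G) :=
    hx ▸ Subgroup.orderOf_coe (⟨y, hyH⟩ : H) ▸ Monoid.order_dvd_exponent _
  refine ⟨x, x.2, y, hyH, fun h1 => hne ?_, hxy,
    Nat.dvd_antisymm (orderOf_map_dvd _ y) (hxy ▸ hyx)⟩
  rw [h1, orderOf_one, eq_comm, hx, Monoid.exp_eq_one_iff] at hxy
  rwa [← not_nontrivial_iff_subsingleton, Subgroup.nontrivial_iff_ne_bot, not_not] at hxy

variable (β) in
def hyperbolicComplement (H : Subgroup G) (x y : G) : Subgroup G :=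
  H ⊓ (β x).ker ⊓ (β y).ker

theorem mem_hyperbolicComplement {H : Subgroup G} {x y g : G} :
    g ∈ hyperbolicComplement β H x y ↔ g ∈ H ∧ β x g = 1 ∧ β y g = 1 :=
  and_assoc

theorem hyperbolicComplement_lt {H : Subgroup G} {x y : G} (hyH : y ∈ H) (hxy : β x y ≠ 1) :
    hyperbolicComplement β H x y < H :=
  SetLike.lt_iff_le_and_exists.mpr
    ⟨inf_le_left.trans inf_le_left, y, hyH, fun h => hxy (mem_hyperbolicComplement.mp h).2.1⟩

theorem IsNondegenerateOn.hyperbolicComplement (hβ : IsAlternating β) {H : Subgroup G} {x y : G}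
    (hH : IsNondegenerateOn β H)
    (hdecomp : H ≤ zpowers x ⊔ zpowers y ⊔ hyperbolicComplement β H x y) :
    IsNondegenerateOn β (hyperbolicComplement β H x y) := by
  intro k hk hk'
  obtain ⟨hkH, hxk, hyk⟩ := mem_hyperbolicComplement.mp hk
  refine hH k hkH fun w hw => ?_
  obtain ⟨ab, hab, k', hk'K, rfl⟩ := mem_sup.mp (hdecomp hw)
  obtain ⟨a, ha, b, hb, rfl⟩ := mem_sup.mp hab
  rw [map_mul, map_mul, hβ.apply_swap a, hβ.apply_swap b,
    apply_eq_one_of_mem_zpowers ha hxk, apply_eq_one_of_mem_zpowers hb hyk, hk' k' hk'K]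
  simp

-- Disjointness of `A` and `B` is left out: it follows from nondegeneracy on `H`
-- (`IsLagrangianSplitting.disjoint`).
variable (β) in
structure IsLagrangianSplitting (H A B : Subgroup G) : Prop where
  sup_eq : A ⊔ B = H
  card_eq : Nat.card A = Nat.card B
  isIsotropic_left : IsIsotropic β A
  isIsotropic_right : IsIsotropic β B

theorem IsLagrangianSplitting.bot : IsLagrangianSplitting β ⊥ ⊥ ⊥ where
  sup_eq := sup_idem _
  card_eq := rfl
  isIsotropic_left := by simp [IsIsotropic]
  isIsotropic_right := by simp [IsIsotropic]

theorem IsLagrangianSplitting.extend (hβ : IsAlternating β) {H A B : Subgroup G} {x y : G}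
    (hxH : x ∈ H) (hyH : y ∈ H) (hxy : IsHyperbolicPair β x y)
    (hdecomp : H ≤ zpowers x ⊔ zpowers y ⊔ hyperbolicComplement β H x y)
    (h : IsLagrangianSplitting β (hyperbolicComplement β H x y) A B) :
    IsLagrangianSplitting β H (zpowers x ⊔ A) (zpowers y ⊔ B) := by
  have hA : A ≤ hyperbolicComplement β H x y := h.sup_eq ▸ le_sup_left
  have hB : B ≤ hyperbolicComplement β H x y := h.sup_eq ▸ le_sup_right
  have hKH : hyperbolicComplement β H x y ≤ H := inf_le_left.trans inf_le_left
  have hxA : Disjoint (zpowers x) A :=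
    (disjoint_zpowers_ker (φ := β y) (by rw [hβ.apply_swap, orderOf_inv, hxy.orderOf_left]))
      |>.mono_right fun _ hg => (mem_hyperbolicComplement.mp (hA hg)).2.2
  have hyB : Disjoint (zpowers y) B := (disjoint_zpowers_ker hxy.orderOf_right).mono_right
    fun _ hg => (mem_hyperbolicComplement.mp (hB hg)).2.1
  refine ⟨le_antisymm ?_ ?_, ?_, ?_, ?_⟩
  · exact sup_le (sup_le (zpowers_le.mpr hxH) (hA.trans hKH))
      (sup_le (zpowers_le.mpr hyH) (hB.trans hKH))
  · rwa [sup_sup_sup_comm, h.sup_eq]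
  · rw [card_sup_of_disjoint hxA, card_sup_of_disjoint hyB, Nat.card_zpowers, Nat.card_zpowers,
      ← hxy.orderOf_left, hxy.orderOf_right, h.card_eq]
  · exact (hβ.isIsotropic_zpowers x).sup hβ h.isIsotropic_left fun _ hs _ ht =>
      apply_eq_one_of_mem_zpowers hs (mem_hyperbolicComplement.mp (hA ht)).2.1
  · exact (hβ.isIsotropic_zpowers y).sup hβ h.isIsotropic_right fun _ hs _ ht =>
      apply_eq_one_of_mem_zpowers hs (mem_hyperbolicComplement.mp (hB ht)).2.2

theorem IsLagrangianSplitting.disjoint {H A B : Subgroup G} (h : IsLagrangianSplitting β H A B)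
    (hH : IsNondegenerateOn β H) : Disjoint A B := by
  rw [disjoint_iff_inf_le]
  rintro g ⟨hgA, hgB⟩
  refine mem_bot.mpr <| hH g (h.sup_eq ▸ mem_sup_left hgA) fun w hw => ?_
  obtain ⟨a, ha, b, hb, rfl⟩ := mem_sup.mp (h.sup_eq ▸ hw)
  rw [map_mul, h.isIsotropic_left g hgA a ha, h.isIsotropic_right g hgB b hb, mul_one]

end Bicharacter

section Units

variable {G R : Type*} [CommGroup G] [Finite G] [CommRing R] [IsDomain R] {β : G →* G →* Rˣ}
  {H : Subgroup G} {x y : G}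

-- The values of `β x` and `β y` are roots of unity of order dividing `orderOf (β x y)`, hence
-- powers of the primitive root `β x y`: finite subgroups of `Rˣ` are cyclic.
theorem le_sup_hyperbolicComplement (hβ : IsAlternating β) (hxH : x ∈ H) (hyH : y ∈ H)
    (hxy : IsHyperbolicPair β x y) :
    H ≤ zpowers x ⊔ zpowers y ⊔ hyperbolicComplement β H x y := by
  intro w hw
  have hpos : 0 < orderOf (β x y) := hxy.orderOf_left ▸ orderOf_pos x
  have hxw : β x w ∈ zpowers (β x y) := Units.mem_zpowers_of_pow_orderOf_eq_one hpos <| by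
    rw [hxy.orderOf_left, apply_pow_orderOf_eq_one]
  have hyw : β y w ∈ zpowers (β y x) := by
    rw [hβ.apply_swap, zpowers_inv]
    refine Units.mem_zpowers_of_pow_orderOf_eq_one hpos ?_
    rw [hxy.orderOf_right, apply_pow_orderOf_eq_one]
  obtain ⟨d, hd⟩ := mem_zpowers_iff.mp hxw
  obtain ⟨c, hc⟩ := mem_zpowers_iff.mp hyw
  have hk : (x ^ c * y ^ d)⁻¹ * w ∈ hyperbolicComplement β H x y := by
    refine mem_hyperbolicComplement.mpr ⟨mul_mem (inv_mem (mul_mem (zpow_mem hxH c)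
      (zpow_mem hyH d))) hw, ?_, ?_⟩ <;>
    simp only [map_mul, map_inv, map_zpow, hβ x, hβ y, one_zpow, one_mul, mul_one, ← hd, ← hc,
      inv_mul_cancel]
  rw [← mul_inv_cancel_left (x ^ c * y ^ d) w]
  exact mul_mem (mul_mem (mem_sup_left (mem_sup_left (zpow_mem_zpowers x c)))
    (mem_sup_left (mem_sup_right (zpow_mem_zpowers y d)))) (mem_sup_right hk)

theorem exists_isLagrangianSplitting (hβ : IsAlternating β) (H : Subgroup G)
    (hH : IsNondegenerateOn β H) : ∃ A B, IsLagrangianSplitting β H A B := by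
  induction hn : Nat.card H using Nat.strong_induction_on generalizing H with
  | _ n ih =>
  obtain rfl | hne := eq_or_ne H ⊥
  · exact ⟨⊥, ⊥, .bot⟩
  obtain ⟨x, hxH, y, hyH, hxy⟩ := exists_isHyperbolicPair hH hne
  have hdecomp := le_sup_hyperbolicComplement hβ hxH hyH hxy
  have hlt : Nat.card (hyperbolicComplement β H x y) < n :=
    hn ▸ card_lt_of_lt (hyperbolicComplement_lt hyH hxy.ne_one)
  obtain ⟨A, B, hAB⟩ := ih _ hlt _ (hH.hyperbolicComplement hβ hdecomp) rfl
  exact ⟨_, _, hAB.extend hβ hxH hyH hxy hdecomp⟩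

end Units

theorem stmt_8 (Γ : Type*) [CommGroup Γ] [Fintype Γ] (α : Γ → Γ → ℂˣ)
    (hbil₁ : ∀ x y z : Γ, α (x * y) z = α x z * α y z)
    (hbil₂ : ∀ x y z : Γ, α x (y * z) = α x y * α x z)
    (halt : ∀ x : Γ, α x x = 1)
    (hnd : ∀ x : Γ, (∀ y : Γ, α x y = 1) → x = 1) :
    ∃ A B : Subgroup Γ, IsCompl A B ∧ Nat.card A = Nat.card B ∧
      (∀ a ∈ A, ∀ a' ∈ A, α a a' = 1) ∧
      (∀ b ∈ B, ∀ b' ∈ B, α b b' = 1) ∧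
      Nonempty (Γ ≃* A × B) := by
  let β : Γ →* Γ →* ℂˣ :=
    MonoidHom.mk' (fun x => MonoidHom.mk' (α x) (hbil₂ x)) fun x y => MonoidHom.ext (hbil₁ x y)
  have hnd' : IsNondegenerateOn β ⊤ := fun x _ hx => hnd x fun y => hx y trivial
  obtain ⟨A, B, hAB⟩ := exists_isLagrangianSplitting (β := β) halt ⊤ hnd'
  have hcompl : IsCompl A B := ⟨hAB.disjoint hnd', codisjoint_iff.mpr hAB.sup_eq⟩
  exact ⟨A, B, hcompl, hAB.card_eq, hAB.isIsotropic_left, hAB.isIsotropic_right,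
    ⟨(topEquiv.symm.trans (MulEquiv.subgroupCongr hcompl.sup_eq_top.symm)).trans
      (prodMulEquivSupOfDisjoint hcompl.disjoint).symm⟩⟩
end
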